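/- arXiv:2209.00271 — 5 statements merged into one kernel-verified Lean document; each statement's English description precedes it below -/
import Mathlib

section
/- Let S be a string of length n. For every i with 1 ≤ i ≤ n, P[i] equals the number of indices j with 1 ≤ j ≤ i such that the prefix S[1..j] is closed, minus one. Equivalently, P[i] = (Σ_{j=1}^{i} OC[j]) − 1. -/
variable {α : Type*}

/-- `β` is a border of `S`: a proper (possibly empty) prefix that is also a suffix. -/
def IsBorder (β S : List α) : Prop :=
  β ≠ S ∧ β <+: S ∧ β <:+ S

/-- `v` occurs in `T` at (0-based) position `p`. -/
def OccursAt (v T : List α) (p : ℕ) : Prop :=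
  p + v.length ≤ T.length ∧ v <+: T.drop p

/-- A string is closed if it has length 1 or it has a border with no internal occurrence. -/
def IsClosedWord (S : List α) : Prop :=
  S.length = 1 ∨ ∃ β, IsBorder β S ∧
    ∀ p, OccursAt β S p → p = 0 ∨ p = S.length - β.length

open Classical in
/-- `OCval S i = 1` if the prefix `S[1..i]` is closed, and `0` otherwise. -/
noncomputable def OCval (S : List α) (i : ℕ) : ℕ :=
  if IsClosedWord (S.take i) then 1 else 0

/-- `Parr S i` is the length of the longest prefix of `S[1..i]` having at least
two (possibly overlapping) occurrences in `S[1..i]`. -/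
noncomputable def Parr (S : List α) (i : ℕ) : ℕ :=
  sSup {ℓ | ∃ p q : ℕ, p < q ∧ OccursAt (S.take ℓ) (S.take i) p ∧
    OccursAt (S.take ℓ) (S.take i) q}

/-- `Barr S i` is the length of the longest border of `S[1..i]`. -/
noncomputable def Barr (S : List α) (i : ℕ) : ℕ :=
  sSup {ℓ | IsBorder (S.take ℓ) (S.take i)}

/-- `Bord S i` is the set of lengths of borders of `S[1..i]`. -/
def Bord (S : List α) (i : ℕ) : Set ℕ :=
  {ℓ | IsBorder (S.take ℓ) (S.take i)}

/-- The substring `S[i..j]` (1-based, inclusive). -/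
def Substr (S : List α) (i j : ℕ) : List α :=
  (S.take j).drop (i - 1)

/-- `S[i..j]` is a maximal closed substring of `S`. -/
def IsMCS (S : List α) (i j : ℕ) : Prop :=
  1 ≤ i ∧ i ≤ j ∧ j ≤ S.length ∧ IsClosedWord (Substr S i j) ∧
    (j = S.length ∨ ¬ IsClosedWord (Substr S i (j + 1))) ∧
    (i = 1 ∨ ¬ IsClosedWord (Substr S (i - 1) j))

open Classical in
/-- Number of maximal blocks of consecutive `1`s in the OC array of `S`. -/
noncomputable def ocRuns (S : List α) : ℕ :=
  ((Finset.Icc 1 S.length).filter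
    (fun i => OCval S i = 1 ∧ (i = 1 ∨ OCval S (i - 1) = 0))).card

/-- The OC array of `S` as a list (1-based entries). -/
noncomputable def ocList (S : List α) : List ℕ :=
  (List.range S.length).map (fun j => OCval S (j + 1))

/-!
`P[i]` is the largest `ℓ` such that `S[1..ℓ]` reoccurs at a positive position inside `S[1..i]`.
Going from `i` to `i + 1`, `P` grows by at most one (cut the last letter off a new occurrence), and
it grows exactly when `S[1..i+1]` is closed. A border of `S[1..i+1]` reoccurs as a suffix, so it is
at most `P[i+1]` long; if `P[i+1] = P[i]` it is also a prefix of the reoccurring prefix of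
`S[1..i]`, which gives an internal occurrence. Conversely, if `P[i+1] > P[i]`, the prefix of length
`P[i+1]` can reoccur only as a suffix of `S[1..i+1]`, so it is a border without internal
occurrence. With `P[1] = 0` and `OC[1] = 1`, summing these increments gives the claim.
-/

namespace List

theorem IsSuffix.occursAt {β T : List α} (h : β <:+ T) :
    OccursAt β T (T.length - β.length) :=
  ⟨by have := h.length_le; omega, by rw [← suffix_iff_eq_drop.mp h]⟩

theorem IsPrefix.suffix_take_of_add_eq {S u : List α} {q n : ℕ} (h : u <+: S.drop q)
    (hn : q + u.length = n) : u <:+ S.take n := by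
  have hu : (S.take n).drop q = u := by
    rw [drop_take, ← hn, Nat.add_sub_cancel_left, ← prefix_iff_eq_take.mp h]
  exact hu ▸ drop_suffix _ _

theorem exists_eq_take_of_prefix_take {β S : List α} {n : ℕ} (h : β <+: S.take n) :
    ∃ b ≤ n, β = S.take b :=
  ⟨β.length, (prefix_take_iff.mp h).2, prefix_iff_eq_take.mp (prefix_take_iff.mp h).1⟩

end List

section RepeatedPrefix

variable {S : List α} {i ℓ : ℕ}

/-- An occurrence of `S[1..ℓ]` at a positive position of `S[1..i]` is the second occurrence
required by `Parr`, the first being the one at `0`. -/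
def repeatedPrefixLengths (S : List α) (i : ℕ) : Set ℕ :=
  {ℓ | ∃ q, 0 < q ∧ q + ℓ ≤ i ∧ S.take ℓ <+: S.drop q}

theorem occursAt_take_take_iff {p : ℕ} (hℓ : ℓ ≤ i) (hi : i ≤ S.length) :
    OccursAt (S.take ℓ) (S.take i) p ↔ p + ℓ ≤ i ∧ S.take ℓ <+: S.drop p := by
  have hℓ' : (S.take ℓ).length = ℓ := by rw [List.length_take]; omega
  have hi' : (S.take i).length = i := by rw [List.length_take]; omega
  rw [OccursAt, hℓ', hi', List.drop_take, List.prefix_take_iff, hℓ']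
  exact ⟨fun ⟨h₁, h₂, _⟩ => ⟨h₁, h₂⟩, fun ⟨h₁, h₂⟩ => ⟨h₁, h₂, by omega⟩⟩

theorem parr_eq_sSup_repeatedPrefixLengths (hi : i ≤ S.length) :
    Parr S i = sSup (repeatedPrefixLengths S i) := by
  rw [Parr]
  congr 1
  ext ℓ
  constructor
  · rintro ⟨p, q, hpq, -, hq⟩
    have hℓ : ℓ ≤ i := by
      have := hq.1
      rw [List.length_take, List.length_take] at this
      omega
    exact ⟨q, by omega, (occursAt_take_take_iff hℓ hi).mp hq⟩
  · rintro ⟨q, hq, hqi, hpre⟩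
    refine ⟨0, q, hq, (occursAt_take_take_iff (by omega) hi).mpr ⟨by omega, ?_⟩,
      (occursAt_take_take_iff (by omega) hi).mpr ⟨hqi, hpre⟩⟩
    simpa using List.take_prefix ℓ S

theorem le_parr (hi : i ≤ S.length) (h : ℓ ∈ repeatedPrefixLengths S i) : ℓ ≤ Parr S i := by
  rw [parr_eq_sSup_repeatedPrefixLengths hi]
  exact le_csSup ⟨i, fun ℓ ⟨q, hq, hqi, _⟩ => by omega⟩ h

theorem parr_mem (h0 : 0 < i) (hi : i ≤ S.length) :
    Parr S i ∈ repeatedPrefixLengths S i := by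
  rw [parr_eq_sSup_repeatedPrefixLengths hi]
  exact Nat.sSup_mem ⟨0, 1, Nat.one_pos, by omega, by simp⟩
    ⟨i, fun ℓ ⟨q, hq, hqi, _⟩ => by omega⟩

theorem parr_one (h : 1 ≤ S.length) : Parr S 1 = 0 := by
  obtain ⟨q, hq, hq1, -⟩ := parr_mem Nat.one_pos h
  omega

theorem parr_le_parr_succ (h0 : 0 < i) (hi : i + 1 ≤ S.length) : Parr S i ≤ Parr S (i + 1) := by
  obtain ⟨q, hq, hqi, hpre⟩ := parr_mem h0 (by omega : i ≤ S.length)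
  exact le_parr hi ⟨q, hq, by omega, hpre⟩

theorem parr_succ_le (h0 : 0 < i) (hi : i + 1 ≤ S.length) : Parr S (i + 1) ≤ Parr S i + 1 := by
  obtain ⟨q, hq, hqi, hpre⟩ := parr_mem (by omega : 0 < i + 1) hi
  rcases Nat.eq_zero_or_pos (Parr S (i + 1)) with h | h
  · omega
  have hmem : Parr S (i + 1) - 1 ∈ repeatedPrefixLengths S i :=
    ⟨q, hq, by omega, (List.take_prefix_take_left (by omega)).trans hpre⟩
  have := le_parr (by omega) hmem
  omega

theorem parr_lt_parr_succ_of_isClosedWord (h0 : 0 < i) (hi : i + 1 ≤ S.length)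
    (hc : IsClosedWord (S.take (i + 1))) : Parr S i < Parr S (i + 1) := by
  have hlen : (S.take (i + 1)).length = i + 1 := by rw [List.length_take]; omega
  rcases hc with h1 | ⟨β, ⟨hne, hpre, hsuf⟩, hocc⟩
  · omega
  obtain ⟨b, hb, rfl⟩ := List.exists_eq_take_of_prefix_take hpre
  have hblen : (S.take b).length = b := by rw [List.length_take]; omega
  have hblt : b < i + 1 := by
    have : b ≠ i + 1 := by rintro rfl; exact hne rfl
    omega
  have hbP : b ≤ Parr S (i + 1) := by
    have := hsuf.occursAt
    rw [hlen, hblen, occursAt_take_take_iff hb hi] at this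
    exact le_parr hi ⟨i + 1 - b, by omega, this⟩
  by_contra! hP
  obtain ⟨q, hq, hqi, hqpre⟩ := parr_mem h0 (by omega : i ≤ S.length)
  have hinternal : OccursAt (S.take b) (S.take (i + 1)) q := by
    rw [occursAt_take_take_iff hb hi]
    exact ⟨by omega, (List.take_prefix_take_left (hbP.trans hP)).trans hqpre⟩
  rcases hocc q hinternal with h | h <;> omega

theorem isClosedWord_take_succ_of_parr_lt (h0 : 0 < i) (hi : i + 1 ≤ S.length)
    (hP : Parr S i < Parr S (i + 1)) : IsClosedWord (S.take (i + 1)) := by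
  obtain ⟨q, hq, hqi, hpre⟩ := parr_mem (by omega : 0 < i + 1) hi
  set ℓ := Parr S (i + 1)
  have hlen : (S.take (i + 1)).length = i + 1 := by rw [List.length_take]; omega
  have hℓlen : (S.take ℓ).length = ℓ := by rw [List.length_take]; omega
  have hends : ∀ q, 0 < q → q + ℓ ≤ i + 1 → S.take ℓ <+: S.drop q → q + ℓ = i + 1 := by
    intro q hq hqi hpre
    by_contra hne
    have := le_parr (by omega : i ≤ S.length) ⟨q, hq, by omega, hpre⟩
    omega
  have hq_end := hends q hq hqi hpre
  refine Or.inr ⟨S.take ℓ, ⟨fun h => ?_, List.take_prefix_take_left (by omega),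
    hpre.suffix_take_of_add_eq (by rw [hℓlen, hq_end])⟩, fun p hp => ?_⟩
  · have := congrArg List.length h
    rw [hℓlen, hlen] at this
    omega
  · rw [hlen, hℓlen]
    rw [occursAt_take_take_iff (by omega) hi] at hp
    rcases Nat.eq_zero_or_pos p with hp0 | hp0
    · exact Or.inl hp0
    · exact Or.inr (by have := hends p hp0 hp.1 hp.2; omega)

theorem parr_succ_eq_parr_add_ocval (h0 : 0 < i) (hi : i + 1 ≤ S.length) :
    Parr S (i + 1) = Parr S i + OCval S (i + 1) := by
  have hmono := parr_le_parr_succ h0 hi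
  have hstep := parr_succ_le h0 hi
  by_cases hc : IsClosedWord (S.take (i + 1))
  · rw [OCval, if_pos hc]
    have := parr_lt_parr_succ_of_isClosedWord h0 hi hc
    omega
  · rw [OCval, if_neg hc]
    by_contra hne
    exact hc (isClosedWord_take_succ_of_parr_lt h0 hi (by omega))

theorem ocval_one (h : 1 ≤ S.length) : OCval S 1 = 1 :=
  if_pos (Or.inl (by rw [List.length_take]; omega))

end RepeatedPrefix

/-- For every `1 ≤ i ≤ n`, `P[i] = (Σ_{j=1}^{i} OC[j]) − 1`. -/
theorem statement_0 {α : Type*} (S : List α) (i : ℕ)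
    (hi1 : 1 ≤ i) (hin : i ≤ S.length) :
    Parr S i = (∑ j ∈ Finset.Icc 1 i, OCval S j) - 1 := by
  induction i, hi1 using Nat.le_induction with
  | base => simp [parr_one hin, ocval_one hin]
  | succ i hi ih =>
    have hsum : 1 ≤ ∑ j ∈ Finset.Icc 1 i, OCval S j :=
      calc 1 = OCval S 1 := (ocval_one (by omega)).symm
        _ ≤ ∑ j ∈ Finset.Icc 1 i, OCval S j :=
          Finset.single_le_sum (fun _ _ => Nat.zero_le _) (Finset.mem_Icc.mpr ⟨le_rfl, hi⟩)
    rw [Finset.sum_Icc_succ_top (by omega), parr_succ_eq_parr_add_ocval hi hin, ih (by omega)]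
    omega
end

section
/- Let S be a string of length n. For every i with 1 ≤ i ≤ n, P[i] = max_{1 ≤ j ≤ i} B[j], i.e., the length of the longest repeated prefix of S[1..i] equals the maximum over j ≤ i of the length of the longest border of S[1..j]. -/
variable {α : Type*}

section statement1proof

variable {α : Type*}

lemma pset_bound {S : List α} {i ℓ : ℕ} (hin : i ≤ S.length)
    (h : ∃ p q : ℕ, p < q ∧ OccursAt (S.take ℓ) (S.take i) p ∧
      OccursAt (S.take ℓ) (S.take i) q) : ℓ + 1 ≤ i := by
  obtain ⟨p, q, hpq, _, hq⟩ := h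
  have h1 := hq.1
  simp [List.length_take] at h1
  omega

lemma bord_bound {S : List α} {i ℓ : ℕ} (hin : i ≤ S.length)
    (h : ℓ ∈ Bord S i) : ℓ + 1 ≤ i := by
  obtain ⟨hne, hpre, _⟩ := h
  have hlen := hpre.length_le
  have hne' : (S.take ℓ).length ≠ (S.take i).length := fun he => hne (hpre.eq_of_length he)
  simp [List.length_take] at hlen hne'
  omega

lemma take_take_drop {S : List α} {q ℓ i : ℕ} (h : q + ℓ ≤ i) :
    ((S.take i).drop q).take ℓ = (S.take (q + ℓ)).drop q := by
  rw [List.drop_take, List.drop_take, List.take_take]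
  congr 1
  omega

/-- A border length of `S[1..j]` with `j ≤ i` gives a repeated prefix of `S[1..i]`. -/
lemma bord_mem_pset {S : List α} {i j ℓ : ℕ} (hj1 : 1 ≤ j) (hji : j ≤ i)
    (hin : i ≤ S.length) (h : ℓ ∈ Bord S j) :
    ∃ p q : ℕ, p < q ∧ OccursAt (S.take ℓ) (S.take i) p ∧
      OccursAt (S.take ℓ) (S.take i) q := by
  have hℓj : ℓ + 1 ≤ j := bord_bound (le_trans hji hin) h
  obtain ⟨hne, hpre, hsuf⟩ := h
  have hlen : (S.take ℓ).length = ℓ := by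
    rw [List.length_take]; omega
  refine ⟨0, j - ℓ, by omega, ⟨?_, ?_⟩, ⟨?_, ?_⟩⟩
  · simp [List.length_take]; omega
  · rw [List.drop_zero]
    have : (S.take i).take ℓ = S.take ℓ := by
      rw [List.take_take]; congr 1; omega
    rw [← this]; exact List.take_prefix ..
  · simp [List.length_take]; omega
  · -- suffix occurrence
    obtain ⟨t, ht⟩ := hsuf
    have htlen : t.length = j - ℓ := by
      have := congrArg List.length ht
      simp [List.length_take] at this
      omega
    have hdropj : (S.take j).drop (j - ℓ) = S.take ℓ := by
      rw [← ht, ← htlen, List.drop_left]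
    have hpj : S.take j <+: S.take i := by
      have : (S.take i).take j = S.take j := by
        rw [List.take_take]; congr 1; omega
      rw [← this]; exact List.take_prefix ..
    obtain ⟨u, hu⟩ := hpj
    rw [← hu]
    have : (S.take j ++ u).drop (j - ℓ) = (S.take j).drop (j - ℓ) ++ u := by
      apply List.drop_append_of_le_length
      simp [List.length_take]; omega
    rw [this, hdropj]
    exact ⟨u, rfl⟩

/-- A repeated prefix of `S[1..i]` gives a border of some `S[1..j]`, `j ≤ i`. -/
lemma pset_mem_bord {S : List α} {i ℓ : ℕ} (hin : i ≤ S.length)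
    (h : ∃ p q : ℕ, p < q ∧ OccursAt (S.take ℓ) (S.take i) p ∧
      OccursAt (S.take ℓ) (S.take i) q) :
    ∃ j, 1 ≤ j ∧ j ≤ i ∧ ℓ ∈ Bord S j := by
  have hℓi : ℓ + 1 ≤ i := pset_bound hin h
  obtain ⟨p, q, hpq, _, hq⟩ := h
  have hlen : (S.take ℓ).length = ℓ := by rw [List.length_take]; omega
  obtain ⟨hq1, hq2⟩ := hq
  rw [hlen] at hq1
  rw [List.length_take] at hq1
  have hqi : q + ℓ ≤ i := by omega
  refine ⟨q + ℓ, by omega, hqi, ?_, ?_, ?_⟩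
  · -- not equal: lengths differ
    intro he
    have := congrArg List.length he
    rw [hlen, List.length_take] at this
    omega
  · have : (S.take (q + ℓ)).take ℓ = S.take ℓ := by
      rw [List.take_take]; congr 1; omega
    rw [← this]; exact List.take_prefix ..
  · -- suffix
    have h1 : ((S.take i).drop q).take ℓ = S.take ℓ := by
      obtain ⟨u, hu⟩ := hq2
      rw [← hu, List.take_left' hlen]
    have h2 := take_take_drop (S := S) hqi
    rw [h1] at h2
    rw [h2]
    exact List.drop_suffix ..

theorem statement_1' {α : Type*} (S : List α) (i : ℕ)
    (hi1 : 1 ≤ i) (hin : i ≤ S.length) :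
    Parr S i = (Finset.Icc 1 i).sup (Barr S) := by
  set Pset := {ℓ | ∃ p q : ℕ, p < q ∧ OccursAt (S.take ℓ) (S.take i) p ∧
    OccursAt (S.take ℓ) (S.take i) q} with hPset
  have hPbdd : BddAbove Pset := ⟨i, fun ℓ hℓ => by
    have := pset_bound hin hℓ; omega⟩
  have hBbdd : ∀ j, j ≤ i → BddAbove (Bord S j) := fun j hj =>
    ⟨j, fun ℓ hℓ => by have := bord_bound (le_trans hj hin) hℓ; omega⟩
  have hP0 : (0 : ℕ) ∈ Pset := by
    refine ⟨0, 1, by omega, ⟨by simp, by simp⟩, ⟨by simp [List.length_take]; omega, by simp⟩⟩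
  have hB0 : ∀ j, 1 ≤ j → j ≤ i → (0 : ℕ) ∈ Bord S j := by
    intro j h1 h2
    refine ⟨?_, by simp, by simp⟩
    intro he
    have := congrArg List.length he
    simp [List.length_take] at this
    omega
  apply le_antisymm
  · -- Parr ≤ sup
    have hmem : Parr S i ∈ Pset := Nat.sSup_mem ⟨0, hP0⟩ hPbdd
    obtain ⟨j, hj1, hji, hjb⟩ := pset_mem_bord hin hmem
    calc Parr S i ≤ Barr S j := le_csSup (hBbdd j hji) hjb
      _ ≤ (Finset.Icc 1 i).sup (Barr S) :=
        Finset.le_sup (Finset.mem_Icc.mpr ⟨hj1, hji⟩)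
  · apply Finset.sup_le
    intro j hj
    rw [Finset.mem_Icc] at hj
    have hmem : Barr S j ∈ Bord S j :=
      Nat.sSup_mem ⟨0, hB0 j hj.1 hj.2⟩ (hBbdd j hj.2)
    exact le_csSup hPbdd (bord_mem_pset hj.1 hj.2 hin hmem)

end statement1proof

/-- For every `1 ≤ i ≤ n`, `P[i] = max_{1 ≤ j ≤ i} B[j]`. -/
theorem statement_1 {α : Type*} (S : List α) (i : ℕ)
    (hi1 : 1 ≤ i) (hin : i ≤ S.length) :
    Parr S i = (Finset.Icc 1 i).sup (Barr S) := by
  exact statement_1' S i hi1 hin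
end

section
/- Let S be a string of length n, and let i ≥ 1, k₁ > 0, t ≥ 1, k₂ > 0 be such that OC[i..i+k₁+t+k₂+1] = 1 0^{k₁} 1^t 0^{k₂} 1 (with i+k₁+t+k₂+1 ≤ n). Then P[i] < k₁ + k₂. -/
variable {α : Type*}

/-- pointwise occurrence of prefix of length ℓ at 0-based position q inside window of length i -/
def Occ2 (S : List α) (ℓ q i : ℕ) : Prop :=
  q + ℓ ≤ i ∧ ∀ x, x < ℓ → S[q + x]? = S[x]?

lemma occ2_mono_len {S : List α} {ℓ' ℓ q i : ℕ} (h : ℓ' ≤ ℓ) (ho : Occ2 S ℓ q i) :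
    Occ2 S ℓ' q i :=
  ⟨le_trans (by omega) ho.1, fun x hx => ho.2 x (by omega)⟩

lemma occ2_mono_win {S : List α} {ℓ q i i' : ℕ} (h : i ≤ i') (ho : Occ2 S ℓ q i) :
    Occ2 S ℓ q i' :=
  ⟨le_trans ho.1 h, ho.2⟩

lemma occ2_zero_pos {S : List α} {ℓ i : ℕ} (h : ℓ ≤ i) : Occ2 S ℓ 0 i :=
  ⟨by omega, fun x _ => by rw [Nat.zero_add]⟩

lemma occursAt_iff_occ2 {S : List α} {ℓ q i : ℕ} (hℓ : ℓ ≤ i) (hi : i ≤ S.length) :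
    OccursAt (S.take ℓ) (S.take i) q ↔ Occ2 S ℓ q i := by
  have hl1 : (S.take ℓ).length = ℓ := by
    rw [List.length_take]; omega
  have hl2 : (S.take i).length = i := by
    rw [List.length_take]; omega
  unfold OccursAt Occ2
  rw [hl1, hl2]
  apply and_congr_right
  intro hq
  rw [List.prefix_iff_eq_take, hl1]
  constructor
  · intro he x hx
    have h2 := congrArg (fun l => l[x]?) he
    simp only [List.getElem?_take, List.getElem?_drop, hx, if_pos] at h2
    rw [if_pos (show q + x < i by omega)] at h2
    exact h2.symm
  · intro h
    apply List.ext_getElem?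
    intro n
    simp only [List.getElem?_take, List.getElem?_drop]
    by_cases hn : n < ℓ
    · rw [if_pos hn, if_pos hn, if_pos (show q + n < i by omega)]
      exact (h n hn).symm
    · rw [if_neg hn, if_neg hn]

lemma pset_bdd {S : List α} {i : ℕ} (hiS : i ≤ S.length) :
    ∀ ℓ ∈ {ℓ | ∃ p q : ℕ, p < q ∧ OccursAt (S.take ℓ) (S.take i) p ∧
      OccursAt (S.take ℓ) (S.take i) q}, ℓ + 1 ≤ i := by
  rintro ℓ ⟨p, q, hpq, _, hq2, hq3⟩
  have hlen : q + (S.take ℓ).length ≤ (S.take i).length := hq2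
  rw [List.length_take, List.length_take] at hlen
  omega

lemma parr_mem_s7 {S : List α} {i : ℕ} (hi1 : 1 ≤ i) (hiS : i ≤ S.length) :
    ∃ q, 1 ≤ q ∧ Occ2 S (Parr S i) q i := by
  have h0 : (0 : ℕ) ∈ {ℓ | ∃ p q : ℕ, p < q ∧ OccursAt (S.take ℓ) (S.take i) p ∧
      OccursAt (S.take ℓ) (S.take i) q} := by
    refine ⟨0, 1, by omega, ?_, ?_⟩ <;>
      rw [occursAt_iff_occ2 (by omega) hiS]
    · exact occ2_zero_pos (by omega)
    · exact ⟨by omega, fun x hx => by omega⟩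
  have hbdd : BddAbove {ℓ | ∃ p q : ℕ, p < q ∧ OccursAt (S.take ℓ) (S.take i) p ∧
      OccursAt (S.take ℓ) (S.take i) q} :=
    ⟨i, fun ℓ hℓ => by have := pset_bdd hiS ℓ hℓ; omega⟩
  have hmem := Nat.sSup_mem ⟨0, h0⟩ hbdd
  have hb := pset_bdd hiS _ hmem
  unfold Parr
  obtain ⟨p, q, hpq, _, hq⟩ := hmem
  refine ⟨q, by omega, ?_⟩
  rw [← occursAt_iff_occ2 (by omega) hiS]
  exact hq

lemma parr_ge {S : List α} {i ℓ q : ℕ} (hiS : i ≤ S.length) (hq : 1 ≤ q)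
    (h : Occ2 S ℓ q i) : ℓ ≤ Parr S i := by
  have hℓi : ℓ ≤ i := by have := h.1; omega
  have hbdd : BddAbove {ℓ | ∃ p q : ℕ, p < q ∧ OccursAt (S.take ℓ) (S.take i) p ∧
      OccursAt (S.take ℓ) (S.take i) q} :=
    ⟨i, fun ℓ hℓ => by have := pset_bdd hiS ℓ hℓ; omega⟩
  apply le_csSup hbdd
  refine ⟨0, q, by omega, ?_, ?_⟩ <;> rw [occursAt_iff_occ2 hℓi hiS]
  · exact occ2_zero_pos hℓi
  · exact h

lemma parr_add_one_le {S : List α} {i : ℕ} (hi1 : 1 ≤ i) (hiS : i ≤ S.length) :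
    Parr S i + 1 ≤ i := by
  obtain ⟨q, hq, ho⟩ := parr_mem_s7 hi1 hiS
  have := ho.1
  omega

lemma ocval_one_iff {S : List α} {j : ℕ} : OCval S j = 1 ↔ IsClosedWord (S.take j) := by
  unfold OCval
  split <;> simp_all

lemma closed_border {S : List α} {j : ℕ} (h2j : 2 ≤ j) (hjS : j ≤ S.length)
    (hc : OCval S j = 1) :
    ∃ b, 1 ≤ b ∧ b + 1 ≤ j ∧ Occ2 S b (j - b) j ∧
      ∀ q, Occ2 S b q j → q = 0 ∨ q = j - b := by
  have hlen : (S.take j).length = j := by rw [List.length_take]; omega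
  rcases ocval_one_iff.mp hc with h1 | ⟨β, ⟨hne, hpre, hsuf⟩, hcond⟩
  · omega
  set b := β.length with hb
  have hbj : b ≤ j := by
    have := hpre.length_le; omega
  have hβ : β = S.take b := by
    have := List.prefix_iff_eq_take.mp hpre
    rw [this, List.take_take, min_eq_left hbj]
  have hblt : b < j := by
    rcases Nat.lt_or_ge b j with h | h
    · exact h
    · exfalso
      apply hne
      rw [hβ]
      have : b = j := by omega
      rw [this]
  have hsufeq : β = (S.take j).drop ((S.take j).length - β.length) := by
    exact List.suffix_iff_eq_drop.mp hsuf
  have hocc : OccursAt β (S.take j) (j - b) := by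
    constructor
    · rw [hlen, ← hb]; omega
    · rw [hlen, ← hb] at hsufeq
      rw [← hsufeq]
  have hcond2 : ∀ q, Occ2 S b q j → q = 0 ∨ q = j - b := by
    intro q hq
    have := hcond q (by
      rw [hβ, occursAt_iff_occ2 hbj hjS]
      exact hq)
    rcases this with h | h
    · exact Or.inl h
    · right; rw [h, hlen]
  have hb1 : 1 ≤ b := by
    by_contra hb0
    have : b = 0 := by omega
    rcases hcond2 1 ⟨by omega, fun x hx => by omega⟩ with h | h <;> omega
  refine ⟨b, hb1, by omega, ?_, hcond2⟩
  rw [hβ, occursAt_iff_occ2 hbj hjS] at hocc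
  exact hocc

lemma closed_parr {S : List α} {j : ℕ} (h2j : 2 ≤ j) (hjS : j ≤ S.length)
    (hc : OCval S j = 1) :
    1 ≤ Parr S j ∧ Parr S j + 1 ≤ j ∧ Occ2 S (Parr S j) (j - Parr S j) j ∧
      ∀ q, Occ2 S (Parr S j) q j → q = 0 ∨ q = j - Parr S j := by
  obtain ⟨b, hb1, hbj, hocc, hcond⟩ := closed_border h2j hjS hc
  have hPb : Parr S j = b := by
    have hge : b ≤ Parr S j := parr_ge hjS (by omega) hocc
    have hle : Parr S j ≤ b := by
      by_contra hlt
      push_neg at hlt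
      obtain ⟨q, hq1, hq⟩ := parr_mem_s7 (by omega) hjS
      have hqb : Occ2 S b q j := occ2_mono_len (by omega) hq
      rcases hcond q hqb with h | h
      · omega
      · have := hq.1; omega
    omega
  rw [hPb]
  exact ⟨hb1, hbj, hocc, hcond⟩

lemma closed_step {S : List α} {j : ℕ} (h2j : 2 ≤ j) (hjS : j ≤ S.length)
    (hc : OCval S j = 1) : Parr S j = Parr S (j - 1) + 1 := by
  obtain ⟨hb1, hbj, hocc, hcond⟩ := closed_parr h2j hjS hc
  set b := Parr S j with hb
  have hge : b - 1 ≤ Parr S (j - 1) := by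
    apply parr_ge (by omega) (show 1 ≤ j - b by omega)
    refine ⟨by omega, fun x hx => hocc.2 x (by omega)⟩
  have hle : Parr S (j - 1) ≤ b - 1 := by
    by_contra hlt
    push_neg at hlt
    obtain ⟨q, hq1, hq⟩ := parr_mem_s7 (by omega) (by omega : j - 1 ≤ S.length)
    have hqb : Occ2 S b q j := occ2_mono_win (by omega) (occ2_mono_len (by omega) hq)
    rcases hcond q hqb with h | h
    · omega
    · have := hq.1; omega
  omega

lemma parr_mono_step {S : List α} {j : ℕ} (h1j : 1 ≤ j - 1) (hjS : j ≤ S.length) :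
    Parr S (j - 1) ≤ Parr S j := by
  obtain ⟨q, hq1, hq⟩ := parr_mem_s7 h1j (show j - 1 ≤ S.length by omega)
  exact parr_ge hjS hq1 (occ2_mono_win (show j - 1 ≤ j by omega) hq)

lemma open_step {S : List α} {j : ℕ} (h2j : 2 ≤ j) (hjS : j ≤ S.length)
    (hc : OCval S j = 0) : Parr S j = Parr S (j - 1) := by
  have hmono := parr_mono_step (by omega : 1 ≤ j - 1) hjS
  obtain ⟨q, hq1, hq⟩ := parr_mem_s7 (by omega : 1 ≤ j) hjS
  set ℓ := Parr S j with hℓ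
  have hub : ℓ ≤ Parr S (j - 1) + 1 := by
    rcases Nat.eq_zero_or_pos ℓ with h0 | hpos
    · omega
    · have : Occ2 S (ℓ - 1) q (j - 1) := ⟨by have := hq.1; omega, fun x hx => hq.2 x (by omega)⟩
      have := parr_ge (by omega : j - 1 ≤ S.length) hq1 this
      omega
  rcases Nat.lt_or_ge (Parr S (j-1)) ℓ with hlt | hge
  swap
  · omega
  -- increment case: show closed, contradiction
  exfalso
  have hℓeq : ℓ = Parr S (j - 1) + 1 := by omega
  have hℓpos : 1 ≤ ℓ := by omega
  have hqend : q + ℓ = j := by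
    rcases Nat.lt_or_ge (q + ℓ) j with h | h
    · exfalso
      have : Occ2 S ℓ q (j - 1) := ⟨by omega, hq.2⟩
      have := parr_ge (by omega : j - 1 ≤ S.length) hq1 this
      omega
    · have := hq.1; omega
  have hℓj : ℓ + 1 ≤ j := by omega
  have hlen : (S.take j).length = j := by rw [List.length_take]; omega
  have hlenℓ : (S.take ℓ).length = ℓ := by rw [List.length_take]; omega
  have hclosed : IsClosedWord (S.take j) := by
    right
    refine ⟨S.take ℓ, ⟨?_, ?_, ?_⟩, ?_⟩
    · intro h
      have := congrArg List.length h
      rw [hlen, hlenℓ] at this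
      omega
    · rw [List.prefix_iff_eq_take, hlenℓ, List.take_take, min_eq_left (by omega)]
    · rw [List.suffix_iff_eq_drop, hlen, hlenℓ]
      have hocc : OccursAt (S.take ℓ) (S.take j) (j - ℓ) := by
        rw [occursAt_iff_occ2 (show ℓ ≤ j by omega) hjS]
        refine ⟨by omega, fun x hx => ?_⟩
        have : j - ℓ + x = q + x := by omega
        rw [this]
        exact hq.2 x hx
      have hpfx := hocc.2
      apply List.IsPrefix.eq_of_length hpfx
      rw [hlenℓ, List.length_drop, hlen]
      omega
    · intro p hp
      rw [hlen, hlenℓ]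
      rw [occursAt_iff_occ2 (show ℓ ≤ j by omega) hjS] at hp
      rcases Nat.eq_zero_or_pos p with h0 | hppos
      · left; exact h0
      · right
        rcases Nat.lt_or_ge (p + ℓ) j with h | h
        · exfalso
          have : Occ2 S ℓ p (j - 1) := ⟨by omega, hp.2⟩
          have := parr_ge (by omega : j - 1 ≤ S.length) hppos this
          omega
        · have := hp.1; omega
  rw [ocval_one_iff.symm] at hclosed
  omega

/-- If `OC[i..i+k₁+t+k₂+1] = 1 0^{k₁} 1^t 0^{k₂} 1` with
`k₁, k₂ > 0` and `t ≥ 1`, then `P[i] < k₁ + k₂`. -/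
theorem statement_7 {α : Type*} (S : List α) (i k₁ t k₂ : ℕ)
    (hi1 : 1 ≤ i) (hk₁ : 1 ≤ k₁) (ht : 1 ≤ t) (hk₂ : 1 ≤ k₂)
    (hin : i + k₁ + t + k₂ + 1 ≤ S.length)
    (h1 : OCval S i = 1)
    (h2 : ∀ j : ℕ, i + 1 ≤ j → j ≤ i + k₁ → OCval S j = 0)
    (h3 : ∀ j : ℕ, i + k₁ + 1 ≤ j → j ≤ i + k₁ + t → OCval S j = 1)
    (h4 : ∀ j : ℕ, i + k₁ + t + 1 ≤ j → j ≤ i + k₁ + t + k₂ → OCval S j = 0)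
    (h5 : OCval S (i + k₁ + t + k₂ + 1) = 1) :
    Parr S i < k₁ + k₂ := by
  by_contra hcon
  push_neg at hcon
  set p := Parr S i with hp
  have hiS : i ≤ S.length := by omega
  have hpi : p + 1 ≤ i := parr_add_one_le hi1 hiS
  have h2i : 2 ≤ i := by omega
  -- P values along the first zero block
  have A : ∀ r, r ≤ k₁ → Parr S (i + r) = p := by
    intro r
    induction r with
    | zero => intro _; rw [Nat.add_zero]
    | succ r ih =>
      intro hr
      have h0 := h2 (i + r + 1) (by omega) (by omega)
      have hs := open_step (show 2 ≤ i + r + 1 by omega)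
        (show i + r + 1 ≤ S.length by omega) h0
      rw [show i + r + 1 - 1 = i + r by omega] at hs
      rw [show i + (r + 1) = i + r + 1 by omega, hs, ih (by omega)]
  -- P values along the ones block
  have B : ∀ r, r ≤ t → Parr S (i + k₁ + r) = p + r := by
    intro r
    induction r with
    | zero => intro _; rw [Nat.add_zero, Nat.add_zero]; exact A k₁ le_rfl
    | succ r ih =>
      intro hr
      have h0 := h3 (i + k₁ + r + 1) (by omega) (by omega)
      have hs := closed_step (show 2 ≤ i + k₁ + r + 1 by omega)
        (show i + k₁ + r + 1 ≤ S.length by omega) h0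
      rw [show i + k₁ + r + 1 - 1 = i + k₁ + r by omega] at hs
      rw [show i + k₁ + (r + 1) = i + k₁ + r + 1 by omega, hs, ih (by omega)]
      omega
  -- P values along the second zero block
  have C : ∀ r, r ≤ k₂ → Parr S (i + k₁ + t + r) = p + t := by
    intro r
    induction r with
    | zero => intro _; rw [Nat.add_zero]; exact B t le_rfl
    | succ r ih =>
      intro hr
      have h0 := h4 (i + k₁ + t + r + 1) (by omega) (by omega)
      have hs := open_step (show 2 ≤ i + k₁ + t + r + 1 by omega)
        (show i + k₁ + t + r + 1 ≤ S.length by omega) h0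
      rw [show i + k₁ + t + r + 1 - 1 = i + k₁ + t + r by omega] at hs
      rw [show i + k₁ + t + (r + 1) = i + k₁ + t + r + 1 by omega, hs, ih (by omega)]
  have D : Parr S (i + k₁ + t + k₂ + 1) = p + t + 1 := by
    have hs := closed_step (show 2 ≤ i + k₁ + t + k₂ + 1 by omega) hin h5
    rw [show i + k₁ + t + k₂ + 1 - 1 = i + k₁ + t + k₂ by omega] at hs
    rw [hs, C k₂ le_rfl]
  -- the three alignment facts
  have occI := (closed_parr h2i hiS h1).2.2.1
  rw [← hp] at occI
  have per1 : ∀ x, x < p → S[(i - p) + x]? = S[x]? := occI.2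
  have hm := closed_parr (show 2 ≤ i + k₁ + t by omega)
    (show i + k₁ + t ≤ S.length by omega) (h3 (i + k₁ + t) (by omega) (by omega))
  rw [B t le_rfl] at hm
  have per2 : ∀ x, x < p + t → S[(i - p) + k₁ + x]? = S[x]? := by
    intro x hx
    have := hm.2.2.1.2 x hx
    rwa [show i + k₁ + t - (p + t) = (i - p) + k₁ by omega] at this
  have hj := closed_parr (show 2 ≤ i + k₁ + t + k₂ + 1 by omega) hin h5
  rw [D] at hj
  have per3 : ∀ x, x < p + t + 1 → S[(i - p) + k₁ + k₂ + x]? = S[x]? := by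
    intro x hx
    have := hj.2.2.1.2 x hx
    rwa [show i + k₁ + t + k₂ + 1 - (p + t + 1) = (i - p) + k₁ + k₂ by omega] at this
  -- the non-extension fact at position i+1
  have hne : S[i]? ≠ S[p]? := by
    intro heq
    have hocc : Occ2 S (p + 1) (i - p) (i + 1) := by
      refine ⟨by omega, fun x hx => ?_⟩
      rcases Nat.lt_or_ge x p with h | h
      · exact per1 x h
      · rw [show x = p by omega, show (i - p) + p = i by omega]
        exact heq
    have hge := parr_ge (show i + 1 ≤ S.length by omega)
      (show 1 ≤ i - p by omega) hocc
    rw [A 1 hk₁] at hge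
    omega
  -- final contradiction chain
  apply hne
  have e1 : S[i]? = S[p - k₁ - k₂]? := by
    have := per3 (p - k₁ - k₂) (by omega)
    rwa [show (i - p) + k₁ + k₂ + (p - k₁ - k₂) = i by omega] at this
  have e2 : S[p]? = S[p - k₂]? := by
    have ha := per2 p (by omega)
    have hb := per3 (p - k₂) (by omega)
    rw [show (i - p) + k₁ + k₂ + (p - k₂) = (i - p) + k₁ + p by omega] at hb
    rw [← ha, ← hb]
  have e3 : S[p - k₂]? = S[p - k₁ - k₂]? := by
    have ha := per1 (p - k₂) (by omega)
    have hb := per2 (p - k₁ - k₂) (by omega)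
    rw [show (i - p) + k₁ + (p - k₁ - k₂) = (i - p) + (p - k₂) by omega] at hb
    rw [← ha, ← hb]
  rw [e1, ← e3, ← e2]
end

section
/- Let S be a string of length n whose OC array factorizes as OC_S = 1^{t₁} 0^{k₁} 1^{t₂} 0^{k₂} ⋯ 1^{t_m} 0^{k_m}, where t₁, …, t_m ≥ 1, k₁, …, k_{m−1} ≥ 1 and k_m ≥ 0. Then for every i with 1 < i < m, k_{i−1} + k_i ≥ t₁ + t₂ + ⋯ + t_{i−1}; in particular k_{i−1} + k_i ≥ i − 1. -/
variable {α : Type*}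

/-!
Write `P(x)` for `Parr S x`, the length of the longest prefix of `S` occurring twice in
`S[1..x]`. For `x ≥ 1`, `P(x+1) ∈ {P(x), P(x)+1}`, and `S[1..x+1]` is closed exactly when
`P(x+1) = P(x) + 1`: a border without internal occurrence is a prefix occurring twice that did not
occur twice in `S[1..x]`, and conversely. So `P(x) + 1` counts the `1`s in `OC[1..x]`, and at the
last `1` of the `r`-th run the new repeated prefix, of length `t₁ + ⋯ + t_r - 1`, is a suffix,
starting at (0-based) position `k₁ + ⋯ + k_{r-1} + 1`.

If `b = t₁ + ⋯ + t_{i-1} > k_{i-1} + k_i`, chasing one letter through these occurrences for the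
runs `i-1`, `i`, `i+1` shows that the prefix of length `b` occurs at position
`k₁ + ⋯ + k_{i-2} + 1`, inside the prefix ending at the first `0` of run `i-1`. But there
`P + 1 = b`.
-/

def PrefixOccursAt (S : List α) (ℓ q : ℕ) : Prop :=
  ∀ j < ℓ, S[q + j]? = S[j]?

theorem PrefixOccursAt.mono {S : List α} {ℓ ℓ' q : ℕ} (h : PrefixOccursAt S ℓ q)
    (hℓ : ℓ' ≤ ℓ) : PrefixOccursAt S ℓ' q :=
  fun j hj => h j (by omega)

theorem prefixOccursAt_zero (S : List α) (ℓ : ℕ) : PrefixOccursAt S ℓ 0 :=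
  fun j _ => by rw [Nat.zero_add]

theorem occursAt_take_take_iff_s8 {S : List α} {ℓ x p : ℕ} (hx : x ≤ S.length)
    (hℓ : ℓ ≤ S.length) :
    OccursAt (S.take ℓ) (S.take x) p ↔ p + ℓ ≤ x ∧ PrefixOccursAt S ℓ p := by
  simp only [OccursAt, List.prefix_iff_eq_take, List.length_take, Nat.min_eq_left hx,
    Nat.min_eq_left hℓ]
  refine and_congr_right fun hpx => ⟨fun h j hj => ?_, fun h => List.ext_getElem? fun j => ?_⟩
  · have := congrArg (·[j]?) h
    simp only [List.getElem?_take, List.getElem?_drop, if_pos hj, if_pos (by omega : p + j < x)]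
      at this
    exact this.symm
  · simp only [List.getElem?_take, List.getElem?_drop]
    split_ifs with hj hpj
    · exact (h j hj).symm
    · omega
    · rfl

theorem occursAt_of_suffix {v T : List α} (h : v <:+ T) : OccursAt v T (T.length - v.length) :=
  ⟨by have := h.length_le; omega, List.suffix_iff_eq_drop.1 h ▸ List.prefix_refl _⟩

theorem OccursAt.suffix {v T : List α} {p : ℕ} (h : OccursAt v T p)
    (hp : p + v.length = T.length) : v <:+ T :=
  (h.2.eq_of_length (by rw [List.length_drop]; omega)) ▸ List.drop_suffix p T

section Parr

variable {S : List α} {ℓ x q : ℕ}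

theorem bddAbove_parr_set (hx : x ≤ S.length) :
    BddAbove {ℓ | ∃ p q : ℕ, p < q ∧ OccursAt (S.take ℓ) (S.take x) p ∧
      OccursAt (S.take ℓ) (S.take x) q} := by
  refine ⟨x, fun ℓ ⟨p, q, hpq, _, hq⟩ => ?_⟩
  have := hq.1
  simp only [List.length_take] at this
  omega

theorem le_parr_of_prefixOccursAt (hx : x ≤ S.length) (hq : 0 < q) (hqx : q + ℓ ≤ x)
    (h : PrefixOccursAt S ℓ q) : ℓ ≤ Parr S x := by
  have hℓ : ℓ ≤ S.length := by omega
  refine le_csSup (bddAbove_parr_set hx) ⟨0, q, hq, ?_, ?_⟩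
  · exact (occursAt_take_take_iff_s8 hx hℓ).2 ⟨by omega, prefixOccursAt_zero S ℓ⟩
  · exact (occursAt_take_take_iff_s8 hx hℓ).2 ⟨hqx, h⟩

theorem exists_prefixOccursAt_of_le_parr (hx0 : 0 < x) (hx : x ≤ S.length)
    (hℓ : ℓ ≤ Parr S x) : ∃ q, 0 < q ∧ q + ℓ ≤ x ∧ PrefixOccursAt S ℓ q := by
  have hne : (0 : ℕ) ∈ {ℓ | ∃ p q : ℕ, p < q ∧ OccursAt (S.take ℓ) (S.take x) p ∧
      OccursAt (S.take ℓ) (S.take x) q} :=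
    ⟨0, 1, one_pos, (occursAt_take_take_iff_s8 hx (Nat.zero_le _)).2 ⟨by omega, nofun⟩,
      (occursAt_take_take_iff_s8 hx (Nat.zero_le _)).2 ⟨hx0, nofun⟩⟩
  obtain ⟨p, q, hpq, -, hq⟩ : Parr S x ∈ _ := Nat.sSup_mem ⟨0, hne⟩ (bddAbove_parr_set hx)
  have hP : Parr S x < x := by
    have := hq.1
    simp only [List.length_take] at this
    omega
  obtain ⟨hqx, hocc⟩ := (occursAt_take_take_iff_s8 hx (by omega)).1 hq
  exact ⟨q, by omega, by omega, hocc.mono hℓ⟩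

theorem parr_lt (hx0 : 0 < x) (hx : x ≤ S.length) : Parr S x < x := by
  obtain ⟨q, hq, hqx, -⟩ := exists_prefixOccursAt_of_le_parr hx0 hx le_rfl
  omega

theorem parr_le_parr_succ_s8 (hx0 : 0 < x) (hx : x + 1 ≤ S.length) :
    Parr S x ≤ Parr S (x + 1) := by
  obtain ⟨q, hq, hqx, hocc⟩ := exists_prefixOccursAt_of_le_parr hx0 (S := S) (by omega) le_rfl
  exact le_parr_of_prefixOccursAt hx hq (by omega) hocc

theorem parr_succ_le_add_one (hx : x + 1 ≤ S.length) : Parr S (x + 1) ≤ Parr S x + 1 := by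
  obtain ⟨q, hq, hqx, hocc⟩ := exists_prefixOccursAt_of_le_parr (by omega : 0 < x + 1) hx le_rfl
  rcases Nat.eq_zero_or_pos (Parr S (x + 1)) with h0 | hpos
  · omega
  have := le_parr_of_prefixOccursAt (S := S) (x := x) (by omega) hq (by omega)
    (hocc.mono (Nat.sub_le _ 1))
  omega

theorem prefixOccursAt_of_parr_lt (hx0 : 0 < x) (hx : x + 1 ≤ S.length)
    (hlt : Parr S x < Parr S (x + 1)) :
    PrefixOccursAt S (Parr S (x + 1)) (x + 1 - Parr S (x + 1)) := by
  obtain ⟨q, hq, hqx, hqocc⟩ := exists_prefixOccursAt_of_le_parr (by omega) hx le_rfl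
  have hq' : x + 1 - Parr S (x + 1) = q := by
    by_contra hne
    have := le_parr_of_prefixOccursAt (x := x) (by omega) hq (by omega) hqocc
    omega
  rwa [hq']

theorem isClosedWord_take_succ_iff (hx0 : 0 < x) (hx : x + 1 ≤ S.length) :
    IsClosedWord (S.take (x + 1)) ↔ Parr S x < Parr S (x + 1) := by
  have hlen : (S.take (x + 1)).length = x + 1 := by rw [List.length_take]; omega
  constructor
  · rintro (h1 | ⟨β, ⟨hne, hpre, hsuf⟩, honly⟩)
    · omega
    set b := β.length
    have hb : b < x + 1 := by
      exact lt_of_le_of_ne (hlen ▸ hpre.length_le) fun h =>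
        hne (hpre.eq_of_length (h.trans hlen.symm))
    have hβ : β = S.take b := by
      rw [List.prefix_iff_eq_take.1 hpre, List.take_take, Nat.min_eq_left hb.le]
    have hocc : ∀ q, OccursAt β (S.take (x + 1)) q ↔
        q + b ≤ x + 1 ∧ PrefixOccursAt S b q := fun q =>
      hβ ▸ occursAt_take_take_iff_s8 hx (by omega)
    -- the empty word would have an internal occurrence at position 1
    have hb0 : 0 < b := by
      by_contra h0
      have := honly 1 ((hocc 1).2 ⟨by omega, fun j hj => by omega⟩)
      omega
    have hb_le : b ≤ Parr S (x + 1) := by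
      obtain ⟨-, hsufocc⟩ := (hocc _).1 (occursAt_of_suffix hsuf)
      exact le_parr_of_prefixOccursAt hx (by omega) (by omega) (hlen ▸ hsufocc)
    have hlt_b : Parr S x < b := by
      by_contra! hle
      obtain ⟨q, hq, hqx, hqocc⟩ := exists_prefixOccursAt_of_le_parr hx0 (by omega) hle
      have := honly q ((hocc q).2 ⟨by omega, hqocc⟩)
      omega
    omega
  · intro hlt
    set ℓ := Parr S (x + 1)
    have hℓ : ℓ < x + 1 := parr_lt (by omega) hx
    have hocc : ∀ q, OccursAt (S.take ℓ) (S.take (x + 1)) q ↔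
        q + ℓ ≤ x + 1 ∧ PrefixOccursAt S ℓ q :=
      fun q => occursAt_take_take_iff_s8 hx (by omega)
    have hinner : ∀ q, 0 < q → q + ℓ ≤ x → ¬ PrefixOccursAt S ℓ q := fun q hq hqx h =>
      absurd (le_parr_of_prefixOccursAt (by omega) hq hqx h) (by omega)
    have hlenℓ : (S.take ℓ).length = ℓ := by rw [List.length_take]; omega
    refine Or.inr
      ⟨S.take ℓ, ⟨fun h => ?_, List.take_prefix_take_left hℓ.le, ?_⟩, fun p hp => ?_⟩
    · have := congrArg List.length h
      omega
    · exact ((hocc _).2 ⟨by omega, prefixOccursAt_of_parr_lt hx0 hx hlt⟩).suffix (by omega)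
    · obtain ⟨hpx, hpocc⟩ := (hocc p).1 hp
      rw [hlen, hlenℓ]
      by_contra! hp'
      exact hinner p (by omega) (by omega) hpocc

open Classical in
theorem parr_succ_eq_add_ocval (hx0 : 0 < x) (hx : x + 1 ≤ S.length) :
    Parr S (x + 1) = Parr S x + OCval S (x + 1) := by
  have hmono := parr_le_parr_succ_s8 hx0 hx
  have hsucc := parr_succ_le_add_one hx
  have hiff := isClosedWord_take_succ_iff hx0 hx
  unfold OCval
  split_ifs with h <;> simp only [hiff] at h <;> omega

theorem parr_add_one_eq_sum_ocval (hx0 : 0 < x) (hx : x ≤ S.length) :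
    Parr S x + 1 = ∑ y ∈ Finset.range x, OCval S (y + 1) := by
  induction x, hx0 using Nat.le_induction with
  | base =>
    have hP : Parr S 1 = 0 := Nat.lt_one_iff.1 (parr_lt one_pos hx)
    have hclosed : IsClosedWord (S.take 1) := Or.inl (by rw [List.length_take]; omega)
    rw [Finset.sum_range_one, OCval, if_pos hclosed, hP]
  | succ x hx1 ih =>
    rw [parr_succ_eq_add_ocval hx1 hx, Finset.sum_range_succ, ← ih (by omega)]
    ring

theorem sum_take_ocList (hx : x ≤ S.length) :
    ((ocList S).take x).sum = ∑ y ∈ Finset.range x, OCval S (y + 1) := by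
  rw [ocList, ← List.map_take, List.take_range, Nat.min_eq_left hx, Finset.sum,
    Finset.range_val, Multiset.range, Multiset.map_coe, Multiset.sum_coe]

end Parr

theorem PrefixOccursAt.succ_of_shifts {S : List α} {n p d e : ℕ} (h₀ : PrefixOccursAt S n p)
    (h₁ : PrefixOccursAt S (n + 1) (p + d)) (h₂ : PrefixOccursAt S (n + 2) (p + d + e))
    (he : 0 < e) (hde : d + e ≤ n) : PrefixOccursAt S (n + 1) p := by
  intro j hj
  rcases Nat.lt_or_ge j n with hjn | hjn
  · exact h₀ j hjn
  obtain rfl : n = j := by omega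
  obtain ⟨c, rfl⟩ : ∃ c, n = d + e + c := ⟨n - d - e, by omega⟩
  calc S[p + (d + e + c)]? = S[p + d + e + c]? := by rw [← Nat.add_assoc, ← Nat.add_assoc]
    _ = S[c]? := h₂ c (by omega)
    _ = S[p + (d + c)]? := by rw [← h₁ c (by omega), Nat.add_assoc]
    _ = S[d + c]? := h₀ (d + c) (by omega)
    _ = S[p + d + (d + e + c)]? := by rw [← h₂ (d + c) (by omega)]; congr 1; omega
    _ = S[d + e + c]? := h₁ _ (by omega)

theorem sum_map_range {M : Type*} [AddCommMonoid M] (f : ℕ → M) (n : ℕ) :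
    ((List.range n).map f).sum = ∑ s ∈ Finset.range n, f s := by
  rw [Finset.sum, Finset.range_val, Multiset.range, Multiset.map_coe, Multiset.sum_coe]

theorem take_flatten_map_range {β : Type*} (g : ℕ → List β) {r m j : ℕ} (hr : r < m)
    (hj : j ≤ (g r).length) :
    ((List.range m).map g).flatten.take (∑ s ∈ Finset.range r, (g s).length + j) =
      ((List.range r).map g).flatten ++ (g r).take j := by
  obtain ⟨n, rfl⟩ : ∃ n, m = r + (n + 1) := ⟨m - r - 1, by omega⟩
  have hlen : ((List.range r).map g).flatten.length = ∑ s ∈ Finset.range r, (g s).length := by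
    rw [List.length_flatten, List.map_map, sum_map_range]; rfl
  rw [List.range_add, List.map_append, List.flatten_append, List.take_append, hlen,
    List.take_of_length_le (by omega), Nat.add_sub_cancel_left, List.range_succ_eq_map]
  simp only [List.map_cons, List.map_map, List.flatten_cons, Nat.add_zero, List.take_append,
    Nat.sub_eq_zero_of_le hj, List.take_zero, List.append_nil]

/-- Runs are indexed from `0`: `u r` and `v r` stand for the paper's `t_{r+1}` and `k_{r+1}`. -/
def ocBlocks (u v : ℕ → ℕ) (m : ℕ) : List ℕ :=
  ((List.range m).map fun r => List.replicate (u r) 1 ++ List.replicate (v r) 0).flatten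

section ocBlocks

variable {u v : ℕ → ℕ} {m : ℕ}

theorem length_ocBlocks : (ocBlocks u v m).length = ∑ s ∈ Finset.range m, (u s + v s) := by
  simp only [ocBlocks, List.length_flatten, List.map_map, sum_map_range, Function.comp_apply,
    List.length_append, List.length_replicate]

theorem sum_take_ocBlocks {r j : ℕ} (hr : r < m) (hj : j ≤ u r + v r) :
    ((ocBlocks u v m).take (∑ s ∈ Finset.range r, (u s + v s) + j)).sum =
      ∑ s ∈ Finset.range r, u s + min j (u r) := by
  have hblock := take_flatten_map_range
    (fun r => List.replicate (u r) 1 ++ List.replicate (v r) 0) hr (j := j)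
    (by simpa only [List.length_append, List.length_replicate] using hj)
  simp only [List.length_append, List.length_replicate] at hblock
  rw [ocBlocks, hblock, List.sum_append, List.sum_flatten, List.map_map, sum_map_range]
  simp [List.take_append, List.take_replicate]

end ocBlocks

section Factorization

variable {S : List α} {u v : ℕ → ℕ} {m : ℕ}

theorem le_length_of_ocList_eq_ocBlocks (hfac : ocList S = ocBlocks u v m) {r j : ℕ}
    (hr : r < m) (hj : j ≤ u r + v r) :
    ∑ s ∈ Finset.range r, (u s + v s) + j ≤ S.length := by
  have hlen : S.length = ∑ s ∈ Finset.range m, (u s + v s) := by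
    rw [← length_ocBlocks, ← hfac, ocList, List.length_map, List.length_range]
  have := Finset.sum_le_sum_of_subset (f := fun s => u s + v s)
    (Finset.range_subset_range.2 (Nat.succ_le_of_lt hr))
  rw [Finset.sum_range_succ] at this
  omega

theorem parr_of_ocList_eq_ocBlocks (hfac : ocList S = ocBlocks u v m) {r j : ℕ} (hr : r < m)
    (hj : j ≤ u r + v r) (hpos : 0 < ∑ s ∈ Finset.range r, (u s + v s) + j) :
    Parr S (∑ s ∈ Finset.range r, (u s + v s) + j) + 1 =
      ∑ s ∈ Finset.range r, u s + min j (u r) := by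
  have hx := le_length_of_ocList_eq_ocBlocks hfac hr hj
  rw [parr_add_one_eq_sum_ocval hpos hx, ← sum_take_ocList hx, hfac, sum_take_ocBlocks hr hj]

theorem prefixOccursAt_of_ocList_eq_ocBlocks (hfac : ocList S = ocBlocks u v m) {r : ℕ}
    (hr : r < m) (hu : 0 < u r) :
    PrefixOccursAt S (∑ s ∈ Finset.range (r + 1), u s - 1)
      (∑ s ∈ Finset.range r, v s + 1) := by
  rw [Finset.sum_range_succ]
  set T := ∑ s ∈ Finset.range r, u s
  set K := ∑ s ∈ Finset.range r, v s
  have hA : ∑ s ∈ Finset.range r, (u s + v s) = T + K := Finset.sum_add_distrib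
  rcases Nat.lt_or_ge (T + u r) 2 with hsmall | hbig
  · exact fun j hj => absurd hj (by omega)
  have hend := parr_of_ocList_eq_ocBlocks hfac hr (j := u r) (by omega) (by omega)
  have hlen := le_length_of_ocList_eq_ocBlocks hfac hr (j := u r) (by omega)
  have hbefore := parr_of_ocList_eq_ocBlocks hfac hr (j := u r - 1) (by omega) (by omega)
  rw [hA] at hend hbefore hlen
  obtain ⟨x, hx⟩ : ∃ x, T + K + u r = x + 1 := ⟨T + K + u r - 1, by omega⟩
  rw [show T + K + (u r - 1) = x by omega] at hbefore
  rw [hx] at hend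
  have hocc := prefixOccursAt_of_parr_lt (S := S) (x := x) (by omega) (by omega) (by omega)
  rwa [show Parr S (x + 1) = T + u r - 1 by omega, show x + 1 - (T + u r - 1) = K + 1 by omega]
    at hocc

theorem sum_range_le_of_ocList_eq_ocBlocks (hfac : ocList S = ocBlocks u v m) {r : ℕ}
    (hr : r + 2 < m) (hu : ∀ s ≤ r + 2, 0 < u s) (hv₀ : 0 < v r) (hv₁ : 0 < v (r + 1)) :
    ∑ s ∈ Finset.range (r + 1), u s ≤ v r + v (r + 1) := by
  by_contra! hlt
  have hu₁ := hu (r + 1) (by omega)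
  have hu₂ := hu (r + 2) (by omega)
  have h₀ := prefixOccursAt_of_ocList_eq_ocBlocks hfac (by omega) (hu r (by omega))
  have h₁ := prefixOccursAt_of_ocList_eq_ocBlocks hfac (by omega) hu₁
  have h₂ := prefixOccursAt_of_ocList_eq_ocBlocks hfac hr hu₂
  -- the prefix ending at the first `0` of run `r` has length `T + u r + K + 1`
  have hpar := parr_of_ocList_eq_ocBlocks hfac (by omega : r < m) (j := u r + 1) (by omega)
    (by omega)
  have hlen := le_length_of_ocList_eq_ocBlocks hfac (by omega : r < m) (j := u r + 1) (by omega)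
  simp only [Finset.sum_range_succ, Finset.sum_add_distrib] at h₀ h₁ h₂ hlt hpar hlen
  set T := ∑ s ∈ Finset.range r, u s
  set K := ∑ s ∈ Finset.range r, v s
  obtain ⟨n, hn⟩ : ∃ n, T + u r = n + 1 := ⟨T + u r - 1, by omega⟩
  have hocc : PrefixOccursAt S (n + 1) (K + 1) := by
    refine PrefixOccursAt.succ_of_shifts (d := v r) (e := v (r + 1)) ?_ ?_ ?_ hv₁ (by omega)
    · exact h₀.mono (by omega)
    · rw [show K + 1 + v r = K + v r + 1 by omega]
      exact h₁.mono (by omega)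
    · rw [show K + 1 + v r + v (r + 1) = K + v r + v (r + 1) + 1 by omega]
      exact h₂.mono (by omega)
  have := le_parr_of_prefixOccursAt hlen (Nat.succ_pos K) (by omega) hocc
  omega

end Factorization

/-- If `OC_S = 1^{t₁} 0^{k₁} ⋯ 1^{t_m} 0^{k_m}` with all `t_r ≥ 1`
and `k_r ≥ 1` for `r < m`, `k_m ≥ 0`, then for `1 < i < m` one has
`k_{i−1} + k_i ≥ t₁ + ⋯ + t_{i−1} ≥ i − 1`. -/
theorem statement_8 {α : Type*} (S : List α) (m : ℕ) (t k : ℕ → ℕ)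
    (ht : ∀ r : ℕ, 1 ≤ r → r ≤ m → 1 ≤ t r)
    (hk : ∀ r : ℕ, 1 ≤ r → r ≤ m - 1 → 1 ≤ k r)
    (hfac : ocList S =
      ((List.range m).map
        (fun r => List.replicate (t (r + 1)) 1 ++ List.replicate (k (r + 1)) 0)).flatten) :
    ∀ i : ℕ, 1 < i → i < m →
      (∑ r ∈ Finset.Icc 1 (i - 1), t r) ≤ k (i - 1) + k i ∧
      i - 1 ≤ k (i - 1) + k i := by
  intro i hi him
  obtain ⟨r, rfl⟩ : ∃ r, i = r + 2 := ⟨i - 2, by omega⟩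
  show ∑ s ∈ Finset.Icc 1 (r + 1), t s ≤ k (r + 1) + k (r + 2) ∧
    r + 1 ≤ k (r + 1) + k (r + 2)
  rw [← Finset.Ico_add_one_right_eq_Icc, Finset.sum_Ico_eq_sum_range, Nat.add_sub_cancel]
  simp only [Nat.add_comm 1]
  have hle : ∑ s ∈ Finset.range (r + 1), t (s + 1) ≤ k (r + 1) + k (r + 2) :=
    sum_range_le_of_ocList_eq_ocBlocks (u := fun s => t (s + 1)) (v := fun s => k (s + 1)) hfac
      (by omega) (fun s hs => ht (s + 1) (by omega) (by omega))
      (hk (r + 1) (by omega) (by omega)) (hk (r + 2) (by omega) (by omega))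
  have hcount : r + 1 ≤ ∑ s ∈ Finset.range (r + 1), t (s + 1) := by
    simpa using Finset.card_nsmul_le_sum (Finset.range (r + 1)) _ 1 fun s hs =>
      ht (s + 1) (by omega) (by have := Finset.mem_range.1 hs; omega)
  exact ⟨hle, by omega⟩
end

section
/- Let S be a string of length n whose OC array factorizes as OC_S = 1^{t₁} 0^{k₁} 1^{t₂} 0^{k₂} ⋯ 1^{t_m} 0^{k_m}, where t₁, …, t_m ≥ 1, k₁, …, k_{m−1} ≥ 1 and k_m ≥ 0. Then n ≥ m + ⌊(m−1)/2⌋². -/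
variable {α : Type*}

/-!
Write `B x` for the length of the longest border of the prefix of length `x`. In a closed prefix
`i` the longest border has no internal occurrence, so every prefix `x` with `B x ≥ B i` has
period `x - B x ≥ i - B i`; in particular `B x < B i` for every shorter prefix `x`. Hence `B`
increases from the start of each run of `1`s to the next, so it is at least `j` at the start of
run `j`, while the period grows by at least one per run. Across a run of `k` zeros `B` climbs
by at most `k`, and comparing this climb with the runs that start inside the longest border at
the end of run `j` shows `2 k ≥ j`; summing over the runs gives the bound.
-/

namespace ClosedWord

def PrefixOccursAt (S : List α) (ℓ p : ℕ) : Prop :=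
  (S.drop p).take ℓ = S.take ℓ

def IsBorderLength (S : List α) (i ℓ : ℕ) : Prop :=
  ℓ < i ∧ PrefixOccursAt S ℓ (i - ℓ)

open Classical in
/-- The length of the longest border of `S.take i` (the paper's `Barr S i` when
`1 ≤ i ≤ S.length`); `i - border S i` is the smallest period of `S.take i`. -/
noncomputable def border (S : List α) (i : ℕ) : ℕ :=
  Nat.findGreatest (IsBorderLength S i) i

variable {S : List α}

theorem prefixOccursAt_zero (S : List α) (p : ℕ) : PrefixOccursAt S 0 p := by
  simp [PrefixOccursAt]

theorem PrefixOccursAt.mono {ℓ ℓ' p : ℕ} (h : PrefixOccursAt S ℓ p) (hℓ : ℓ' ≤ ℓ) :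
    PrefixOccursAt S ℓ' p := by
  have := congrArg (List.take ℓ') h
  simpa [PrefixOccursAt, List.take_take, inf_of_le_left hℓ] using this

theorem PrefixOccursAt.of_add {L ℓ d u : ℕ} (hL : PrefixOccursAt S L d)
    (hℓ : PrefixOccursAt S ℓ (d + u)) (hle : u + ℓ ≤ L) : PrefixOccursAt S ℓ u := by
  have := congrArg (fun l : List α => (l.drop u).take ℓ) hL
  simp only [List.drop_take, List.drop_drop] at this
  rw [List.take_take, List.take_take, inf_of_le_left (by omega : ℓ ≤ L - u)] at this
  unfold PrefixOccursAt at hℓ ⊢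
  rw [← this]
  exact hℓ

theorem eq_take_of_prefix_take {β : List α} {i : ℕ} (h : β <+: S.take i) :
    β.length ≤ i ∧ β = S.take β.length := by
  have hβ : β.length ≤ i := h.length_le.trans (List.length_take_le _ _)
  refine ⟨hβ, ?_⟩
  conv_lhs => rw [List.prefix_iff_eq_take.mp h]
  rw [List.take_take, inf_of_le_left hβ]

theorem occursAt_take_iff {ℓ i p : ℕ} (hℓ : ℓ ≤ S.length) (hi : i ≤ S.length) :
    OccursAt (S.take ℓ) (S.take i) p ↔ p + ℓ ≤ i ∧ PrefixOccursAt S ℓ p := by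
  unfold OccursAt PrefixOccursAt
  rw [List.prefix_iff_eq_take, List.length_take_of_le hℓ, List.length_take_of_le hi,
    List.drop_take, List.take_take, eq_comm]
  constructor
  · rintro ⟨hp, h⟩
    rw [inf_of_le_left (by omega : ℓ ≤ i - p)] at h
    exact ⟨hp, h⟩
  · rintro ⟨hp, h⟩
    rw [inf_of_le_left (by omega : ℓ ≤ i - p)]
    exact ⟨hp, h⟩

theorem isBorder_take_iff {ℓ i : ℕ} (hℓ : ℓ ≤ i) (hi : i ≤ S.length) :
    IsBorder (S.take ℓ) (S.take i) ↔ IsBorderLength S i ℓ := by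
  have hsuf : S.take ℓ <:+ S.take i ↔ PrefixOccursAt S ℓ (i - ℓ) := by
    rw [List.suffix_iff_eq_drop, List.length_take_of_le hi, List.length_take_of_le (hℓ.trans hi),
      List.drop_take, Nat.sub_sub_self hℓ, eq_comm]
    rfl
  have hne : S.take ℓ ≠ S.take i ↔ ℓ < i := by
    rw [Ne, List.take_eq_take_iff, inf_of_le_left (hℓ.trans hi), inf_of_le_left hi]
    omega
  unfold IsBorder IsBorderLength
  rw [hne, hsuf]
  exact ⟨fun h => ⟨h.1, h.2.2⟩, fun h => ⟨h.1, List.take_prefix_take_left hℓ, h.2⟩⟩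

theorem isClosedWord_take_iff {i : ℕ} (hi : i ≤ S.length) :
    IsClosedWord (S.take i) ↔ i = 1 ∨ ∃ ℓ, IsBorderLength S i ℓ ∧
      ∀ p, 0 < p → p + ℓ ≤ i → PrefixOccursAt S ℓ p → p = i - ℓ := by
  unfold IsClosedWord
  rw [List.length_take_of_le hi]
  refine or_congr Iff.rfl ⟨?_, ?_⟩
  · rintro ⟨β, hβ, hocc⟩
    obtain ⟨hlen, hβeq⟩ := eq_take_of_prefix_take hβ.2.1
    rw [hβeq] at hβ hocc
    refine ⟨β.length, (isBorder_take_iff hlen hi).mp hβ, fun p hp hpi hp' => ?_⟩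
    rcases hocc p ((occursAt_take_iff (hlen.trans hi) hi).mpr ⟨hpi, hp'⟩) with h | h
    · omega
    · rwa [List.length_take_of_le (hlen.trans hi)] at h
  · rintro ⟨ℓ, hℓ, hno⟩
    refine ⟨S.take ℓ, (isBorder_take_iff hℓ.1.le hi).mpr hℓ, fun p hp => ?_⟩
    rw [List.length_take_of_le (hℓ.1.le.trans hi)]
    obtain ⟨hpi, hocc⟩ := (occursAt_take_iff (hℓ.1.le.trans hi) hi).mp hp
    rcases Nat.eq_zero_or_pos p with h | h
    · exact Or.inl h
    · exact Or.inr (hno p h hpi hocc)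

theorem _root_.IsClosedWord.one_le {i : ℕ} (hc : IsClosedWord (S.take i)) : 1 ≤ i := by
  rcases Nat.eq_zero_or_pos i with rfl | h
  · rcases hc with h | ⟨β, ⟨hne, hpre, -⟩, -⟩
    · simp at h
    · simp only [List.take_zero, List.prefix_nil] at hpre
      exact absurd hpre hne
  · exact h

theorem isBorderLength_border {i : ℕ} (hi : 1 ≤ i) : IsBorderLength S i (border S i) := by
  classical
  exact Nat.findGreatest_spec (Nat.zero_le i) ⟨hi, prefixOccursAt_zero S i⟩

theorem le_border {i ℓ : ℕ} (h : IsBorderLength S i ℓ) : ℓ ≤ border S i := by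
  classical
  exact Nat.le_findGreatest h.1.le h

theorem border_lt {i : ℕ} (hi : 1 ≤ i) : border S i < i :=
  (isBorderLength_border hi).1

theorem border_one : border S 1 = 0 := by
  have := border_lt (S := S) le_rfl
  omega

theorem IsBorderLength.pred {i ℓ : ℕ} (h : IsBorderLength S (i + 1) ℓ) (hℓ : 1 ≤ ℓ) :
    IsBorderLength S i (ℓ - 1) := by
  refine ⟨by have := h.1; omega, ?_⟩
  rw [show i - (ℓ - 1) = i + 1 - ℓ by have := h.1; omega]
  exact h.2.mono (Nat.sub_le ℓ 1)

theorem IsBorderLength.of_lt_border {i ℓ : ℕ} (h : IsBorderLength S i ℓ)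
    (hℓ : ℓ < border S i) : IsBorderLength S (border S i) ℓ := by
  have hb := isBorderLength_border (S := S) (i := i) (by have := h.1; omega)
  refine ⟨hℓ, hb.2.of_add ?_ (by omega : border S i - ℓ + ℓ ≤ border S i)⟩
  rw [show i - border S i + (border S i - ℓ) = i - ℓ by have := hb.1; omega]
  exact h.2

theorem border_succ_le (i : ℕ) : border S (i + 1) ≤ border S i + 1 := by
  rcases Nat.eq_zero_or_pos (border S (i + 1)) with h | h
  · omega
  · have := le_border ((isBorderLength_border (by omega)).pred h)
    omega

theorem border_add_le (i u : ℕ) : border S (i + u) ≤ border S i + u := by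
  induction u with
  | zero => simp
  | succ u ih =>
    have := border_succ_le (S := S) (i + u)
    rw [← Nat.add_assoc]
    omega

theorem border_succ_le_border_border_add_one {i : ℕ} (h : border S (i + 1) ≤ border S i) :
    border S (i + 1) ≤ border S (border S i) + 1 := by
  rcases Nat.eq_zero_or_pos (border S (i + 1)) with h0 | hpos
  · omega
  · have hb := (isBorderLength_border (S := S) (i := i + 1) (by omega)).pred hpos
    have := le_border (hb.of_lt_border (by omega))
    omega

/-- The border witnessing that a prefix is closed can only be its longest border. -/
theorem _root_.IsClosedWord.eq_of_prefixOccursAt_border {i p : ℕ}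
    (hc : IsClosedWord (S.take i)) (hi : i ≤ S.length) (hp : 0 < p) (hpi : p + border S i ≤ i)
    (hocc : PrefixOccursAt S (border S i) p) : p = i - border S i := by
  have hb := isBorderLength_border (S := S) hc.one_le
  rcases (isClosedWord_take_iff hi).mp hc with rfl | ⟨ℓ, hℓ, hno⟩
  · rw [border_one] at hpi ⊢
    omega
  · obtain rfl : ℓ = border S i := by
      refine le_antisymm (le_border hℓ) (not_lt.mp fun hlt => ?_)
      have := hno (i - border S i) (by omega) (by omega) (hb.2.mono hlt.le)
      omega
    exact hno p hp hpi hocc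

theorem _root_.IsClosedWord.sub_border_le {i ℓ p : ℕ} (hc : IsClosedWord (S.take i))
    (hi : i ≤ S.length) (hp : 0 < p) (hℓ : border S i ≤ ℓ) (hocc : PrefixOccursAt S ℓ p) :
    i - border S i ≤ p := by
  by_cases hpi : p + border S i ≤ i
  · exact (hc.eq_of_prefixOccursAt_border hi hp hpi (hocc.mono hℓ)).ge
  · omega

theorem _root_.IsClosedWord.sub_border_le_sub_border {i x : ℕ} (hc : IsClosedWord (S.take i))
    (hi : i ≤ S.length) (hx : 1 ≤ x) (hb : border S i ≤ border S x) :
    i - border S i ≤ x - border S x :=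
  hc.sub_border_le hi (Nat.sub_pos_of_lt (border_lt hx)) hb (isBorderLength_border hx).2

theorem _root_.IsClosedWord.border_add_sub_border_lt {i x y : ℕ} (hc : IsClosedWord (S.take i))
    (hi : i ≤ S.length) (hx : 1 ≤ x) (hiy : i ≤ y) (hxy : x < y) :
    border S x + (i - border S i) < y := by
  have hxb := border_lt (S := S) hx
  have hib := border_lt (S := S) hc.one_le
  by_cases hb : border S i ≤ border S x
  · have := hc.sub_border_le_sub_border hi hx hb
    omega
  · omega

theorem _root_.IsClosedWord.border_lt_border {i x : ℕ} (hc : IsClosedWord (S.take i))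
    (hi : i ≤ S.length) (hx : 1 ≤ x) (hxi : x < i) : border S x < border S i := by
  have := hc.border_add_sub_border_lt hi hx le_rfl hxi
  have := border_lt (S := S) hc.one_le
  omega

theorem _root_.IsClosedWord.border_succ_le_of_not_closed {i : ℕ} (hc : IsClosedWord (S.take i))
    (hi : i + 1 ≤ S.length) (ho : ¬ IsClosedWord (S.take (i + 1))) :
    border S (i + 1) ≤ border S i := by
  have hi1 := hc.one_le
  refine not_lt.mp fun hlt => ho ?_
  have heq : border S (i + 1) = border S i + 1 := by
    have := border_succ_le (S := S) i
    omega
  rw [isClosedWord_take_iff hi]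
  refine Or.inr ⟨border S i + 1, heq ▸ isBorderLength_border (by omega),
    fun p hp hpi hocc => ?_⟩
  have := hc.eq_of_prefixOccursAt_border (by omega) hp (by omega) (hocc.mono (Nat.le_succ _))
  have := border_lt (S := S) hi1
  omega

theorem _root_.IsClosedWord.border_succ {i : ℕ} (hc : IsClosedWord (S.take i))
    (hc' : IsClosedWord (S.take (i + 1))) (hi : i + 1 ≤ S.length) :
    border S (i + 1) = border S i + 1 := by
  have := hc'.border_lt_border hi hc.one_le (Nat.lt_add_one i)
  have := border_succ_le (S := S) i
  omega

theorem _root_.Nat.exists_le_and_lt_succ_of_le_of_lt {f : ℕ → ℕ} {b j : ℕ} (h0 : f 0 ≤ b)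
    (hj : b < f (j + 1)) : ∃ s ≤ j, f s ≤ b ∧ b < f (s + 1) := by
  induction j with
  | zero => exact ⟨0, le_rfl, h0, hj⟩
  | succ j ih =>
    by_cases hb : b < f (j + 1)
    · obtain ⟨s, hs, h⟩ := ih hb
      exact ⟨s, by omega, h⟩
    · exact ⟨j + 1, le_rfl, not_lt.mp hb, hj⟩

/-- `a j` and `e j` are the first and last positions (1-based) of the `j`-th run of `1`s
(0-based) of the OC array, for the first `m` runs; consecutive runs are separated by at least
one `0`. -/
structure ClosedRuns (S : List α) (m : ℕ) (a e : ℕ → ℕ) : Prop where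
  start_zero : a 0 = 1
  start_le_end : ∀ j < m, a j ≤ e j
  end_lt_start : ∀ j, j + 1 < m → e j + 1 < a (j + 1)
  end_le_length : ∀ j < m, e j ≤ S.length
  closed : ∀ j < m, ∀ x, a j ≤ x → x ≤ e j → IsClosedWord (S.take x)
  not_closed : ∀ j, j + 1 < m → ∀ x, e j < x → x < a (j + 1) → ¬ IsClosedWord (S.take x)

namespace ClosedRuns

variable {m : ℕ} {a e : ℕ → ℕ}

theorem start_le_length (h : ClosedRuns S m a e) {j : ℕ} (hj : j < m) : a j ≤ S.length :=
  (h.start_le_end j hj).trans (h.end_le_length j hj)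

theorem closed_start (h : ClosedRuns S m a e) {j : ℕ} (hj : j < m) :
    IsClosedWord (S.take (a j)) :=
  h.closed j hj (a j) le_rfl (h.start_le_end j hj)

theorem closed_end (h : ClosedRuns S m a e) {j : ℕ} (hj : j < m) :
    IsClosedWord (S.take (e j)) :=
  h.closed j hj (e j) (h.start_le_end j hj) le_rfl

theorem border_start_lt (h : ClosedRuns S m a e) {j : ℕ} (hj : j + 1 < m) :
    border S (a j) < border S (a (j + 1)) :=
  (h.closed_start hj).border_lt_border (h.start_le_length hj) (h.closed_start (by omega)).one_le
    (by have := h.start_le_end j (by omega); have := h.end_lt_start j hj; omega)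

theorem border_start_add_le (h : ClosedRuns S m a e) {j u : ℕ} (hju : j + u < m) :
    border S (a j) + u ≤ border S (a (j + u)) := by
  induction u with
  | zero => simp
  | succ u ih =>
    have := h.border_start_lt (j := j + u) (by omega)
    have := ih (by omega)
    rw [← Nat.add_assoc j u 1]
    omega

theorem le_border_start (h : ClosedRuns S m a e) {j : ℕ} (hj : j < m) : j ≤ border S (a j) := by
  simpa [h.start_zero, border_one] using h.border_start_add_le (j := 0) (u := j) (by omega)

theorem border_end (h : ClosedRuns S m a e) {j : ℕ} (hj : j < m) :
    border S (e j) + a j = border S (a j) + e j := by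
  have hrun : ∀ v, a j + v ≤ e j → border S (a j + v) = border S (a j) + v := by
    intro v
    induction v with
    | zero => simp
    | succ v ih =>
      intro hv
      rw [← Nat.add_assoc (a j) v 1, (h.closed j hj (a j + v) (by omega) (by omega)).border_succ
        (h.closed j hj _ (by omega) (by omega)) (by have := h.end_le_length j hj; omega),
        ih (by omega)]
      omega
  have hae := h.start_le_end j hj
  have := hrun (e j - a j) (by omega)
  rw [Nat.add_sub_cancel' hae] at this
  omega

theorem end_succ_le_length (h : ClosedRuns S m a e) {j : ℕ} (hj : j + 1 < m) :
    e j + 1 ≤ S.length := by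
  have := h.end_lt_start j hj
  have := h.start_le_length hj
  omega

theorem border_end_succ_le (h : ClosedRuns S m a e) {j : ℕ} (hj : j + 1 < m) :
    border S (e j + 1) ≤ border S (e j) :=
  (h.closed_end (by omega)).border_succ_le_of_not_closed (h.end_succ_le_length hj)
    (h.not_closed j hj _ (Nat.lt_add_one _) (h.end_lt_start j hj))

theorem border_start_succ_le (h : ClosedRuns S m a e) {j : ℕ} (hj : j + 1 < m) :
    border S (a (j + 1)) ≤ border S (e j + 1) + (a (j + 1) - e j - 1) := by
  have := border_add_le (S := S) (e j + 1) (a (j + 1) - e j - 1)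
  rwa [show e j + 1 + (a (j + 1) - e j - 1) = a (j + 1) by have := h.end_lt_start j hj; omega]
    at this

/-- The period is constant along a run, grows at the first `0`, and cannot decrease along the
`0`s since the border grows by at most one. -/
theorem sub_border_start_lt (h : ClosedRuns S m a e) {j : ℕ} (hj : j + 1 < m) :
    a j - border S (a j) < a (j + 1) - border S (a (j + 1)) := by
  have := h.border_end (j := j) (by omega)
  have := h.border_end_succ_le hj
  have := h.border_start_succ_le hj
  have := h.end_lt_start j hj
  have := h.start_le_end j (by omega)
  have := border_lt (S := S) (h.closed_start (j := j) (by omega)).one_le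
  omega

theorem lt_sub_border_start (h : ClosedRuns S m a e) {j : ℕ} (hj : j < m) :
    j < a j - border S (a j) := by
  induction j with
  | zero => simp [h.start_zero, border_one]
  | succ j ih =>
    have := h.sub_border_start_lt hj
    have := ih (by omega)
    omega

/-- Let `b` and `l` be the longest borders at the end of run `j` and one step later, and `c` the
longest border at the start of run `j + 1`; across the `k` zeros in between, `c ≤ l + k`.
With `s` the last run starting inside the prefix of length `b`, the run starts after it give
`l + (j - s) ≤ c`, and the period of run `s`, at least `s + 1`, gives `l + s < c`. -/
theorem le_two_mul_gap (h : ClosedRuns S m a e) {j : ℕ} (hj : j + 1 < m) :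
    j ≤ 2 * (a (j + 1) - e j - 1) := by
  have hbc : border S (e j) < border S (a (j + 1)) :=
    (h.closed_start hj).border_lt_border (h.start_le_length hj)
      (h.closed_end (j := j) (by omega)).one_le (by have := h.end_lt_start j hj; omega)
  have hl := h.border_end_succ_le hj
  have hlb := border_succ_le_border_border_add_one hl
  have hcl := h.border_start_succ_le hj
  have hc := h.le_border_start hj
  rcases Nat.eq_zero_or_pos (border S (e j)) with hb0 | hb1
  · omega
  obtain ⟨s, hsj, has, hbs⟩ := Nat.exists_le_and_lt_succ_of_le_of_lt (f := a)
    (b := border S (e j)) (j := j) (by rw [h.start_zero]; omega)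
    (by have := border_lt (S := S) (h.closed_end (j := j) (by omega)).one_le
        have := h.end_lt_start j hj
        omega)
  have hlc : border S (e j + 1) ≤ border S (a (s + 1)) := by
    have := (h.closed_start (j := s + 1) (by omega)).border_lt_border
      (h.start_le_length (by omega)) hb1 hbs
    omega
  have hchain : border S (a (s + 1)) + (j - s) ≤ border S (a (j + 1)) := by
    have := h.border_start_add_le (j := s + 1) (u := j - s) (by omega)
    rwa [show s + 1 + (j - s) = j + 1 by omega] at this
  have hperiod := (h.closed_start (j := s) (by omega)).border_add_sub_border_lt
    (h.start_le_length (by omega)) hb1 (y := border S (a (j + 1))) (by omega) hbc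
  have := h.lt_sub_border_start (j := s) (by omega)
  omega

theorem length_bound (h : ClosedRuns S m a e) : m + ((m - 1) / 2) ^ 2 ≤ S.length := by
  rcases Nat.eq_zero_or_pos m with rfl | hm
  · simp
  have hstart : ∀ j < m, j + 1 + j / 2 * ((j + 1) / 2) ≤ a j := by
    intro j hj
    induction j with
    | zero => simp [h.start_zero]
    | succ j ih =>
      have := ih (by omega)
      have := h.le_two_mul_gap hj
      have := h.start_le_end j (by omega)
      have := h.end_lt_start j hj
      have : (j + 1) / 2 * ((j + 1 + 1) / 2) = j / 2 * ((j + 1) / 2) + (j + 1) / 2 := by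
        rw [show (j + 1 + 1) / 2 = j / 2 + 1 by omega]
        ring
      omega
  have hsq : ((m - 1) / 2) ^ 2 ≤ (m - 1) / 2 * ((m - 1 + 1) / 2) := by
    rw [sq]
    exact Nat.mul_le_mul_left _ (Nat.div_le_div_right (by omega))
  have := hstart (m - 1) (by omega)
  have := h.start_le_length (j := m - 1) (by omega)
  omega

end ClosedRuns

theorem OCval_eq_one_iff {i : ℕ} : OCval S i = 1 ↔ IsClosedWord (S.take i) := by
  unfold OCval
  split_ifs with h <;> simp [h]

theorem OCval_of_ocList_eq_append {P Q R : List ℕ} (h : ocList S = P ++ Q ++ R) {u : ℕ}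
    (hu : u < Q.length) : OCval S (P.length + u + 1) = Q[u] := by
  have hlen := congrArg List.length h
  simp only [ocList, List.length_map, List.length_range, List.length_append] at hlen
  have := List.getElem_of_eq h (i := P.length + u) (by simp [ocList]; omega)
  simpa [ocList, List.getElem_append_right, List.getElem_append_left, hu] using this

theorem _root_.List.flatten_range_map_eq_append {β : Type*} (g : ℕ → List β) {r m : ℕ}
    (hr : r < m) :
    ∃ R, ((List.range m).map g).flatten = ((List.range r).map g).flatten ++ g r ++ R := by
  refine ⟨((List.range (m - (r + 1))).map fun i => g (r + 1 + i)).flatten, ?_⟩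
  conv_lhs => rw [show m = r + 1 + (m - (r + 1)) by omega, List.range_add, List.range_succ]
  simp only [List.map_append, List.flatten_append, List.map_map]
  simp [Function.comp_def]

def runBlock (t k : ℕ → ℕ) (r : ℕ) : List ℕ :=
  List.replicate (t (r + 1)) 1 ++ List.replicate (k (r + 1)) 0

def runOffset (t k : ℕ → ℕ) (j : ℕ) : ℕ :=
  ∑ r ∈ Finset.range j, (t (r + 1) + k (r + 1))

theorem runOffset_succ (t k : ℕ → ℕ) (j : ℕ) :
    runOffset t k (j + 1) = runOffset t k j + (t (j + 1) + k (j + 1)) :=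
  Finset.sum_range_succ _ _

theorem length_flatten_runBlock (t k : ℕ → ℕ) (j : ℕ) :
    ((List.range j).map (runBlock t k)).flatten.length = runOffset t k j := by
  induction j with
  | zero => simp [runOffset]
  | succ j ih =>
    rw [List.range_succ, List.map_append, List.flatten_append, List.length_append, ih,
      runOffset_succ]
    simp [runBlock]

theorem OCval_runOffset_add {m : ℕ} {t k : ℕ → ℕ}
    (hfac : ocList S = ((List.range m).map (runBlock t k)).flatten) {j u : ℕ} (hj : j < m)
    (hu : u < t (j + 1) + k (j + 1)) :
    OCval S (runOffset t k j + u + 1) = if u < t (j + 1) then 1 else 0 := by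
  obtain ⟨R, hR⟩ := List.flatten_range_map_eq_append (runBlock t k) hj
  rw [hR] at hfac
  rw [← length_flatten_runBlock, OCval_of_ocList_eq_append hfac (by simpa [runBlock] using hu)]
  split_ifs with h
  · simp [runBlock, List.getElem_append_left, h]
  · simp only [runBlock]
    rw [List.getElem_append_right (by simpa using h)]
    simp

theorem runOffset_succ_le_length {m : ℕ} {t k : ℕ → ℕ}
    (hfac : ocList S = ((List.range m).map (runBlock t k)).flatten) {j : ℕ} (hj : j < m) :
    runOffset t k (j + 1) ≤ S.length := by
  obtain ⟨R, hR⟩ := List.flatten_range_map_eq_append (runBlock t k) hj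
  have := congrArg List.length (hfac.trans hR)
  simp only [ocList, List.length_map, List.length_range, List.length_append,
    length_flatten_runBlock, runBlock, List.length_replicate] at this
  rw [runOffset_succ]
  omega

theorem closedRuns_of_ocList_eq {m : ℕ} {t k : ℕ → ℕ}
    (ht : ∀ r, 1 ≤ r → r ≤ m → 1 ≤ t r) (hk : ∀ r, 1 ≤ r → r ≤ m - 1 → 1 ≤ k r)
    (hfac : ocList S = ((List.range m).map (runBlock t k)).flatten) :
    ClosedRuns S m (fun j => runOffset t k j + 1) (fun j => runOffset t k j + t (j + 1)) where
  start_zero := by simp [runOffset]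
  start_le_end j hj := by
    have := ht (j + 1) (by omega) (by omega)
    omega
  end_lt_start j hj := by
    have := hk (j + 1) (by omega) (by omega)
    rw [runOffset_succ]
    omega
  end_le_length j hj := by
    have := runOffset_succ_le_length hfac hj
    rw [runOffset_succ] at this
    omega
  closed j hj x hx hxe := by
    have := OCval_runOffset_add hfac hj (u := x - runOffset t k j - 1) (by omega)
    rwa [if_pos (by omega), show runOffset t k j + (x - runOffset t k j - 1) + 1 = x by omega,
      OCval_eq_one_iff] at this
  not_closed j hj x hex hxa := by
    have := runOffset_succ t k j
    have := OCval_runOffset_add hfac (by omega : j < m) (u := x - runOffset t k j - 1)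
      (by omega)
    rw [if_neg (by omega), show runOffset t k j + (x - runOffset t k j - 1) + 1 = x by omega]
      at this
    rw [← OCval_eq_one_iff, this]
    exact zero_ne_one

end ClosedWord

/-- If `OC_S = 1^{t₁} 0^{k₁} ⋯ 1^{t_m} 0^{k_m}` with all `t_r ≥ 1`
and `k_r ≥ 1` for `r < m`, `k_m ≥ 0`, then `n ≥ m + ⌊(m−1)/2⌋²`. -/
theorem statement_9 {α : Type*} (S : List α) (m : ℕ) (t k : ℕ → ℕ)
    (ht : ∀ r : ℕ, 1 ≤ r → r ≤ m → 1 ≤ t r)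
    (hk : ∀ r : ℕ, 1 ≤ r → r ≤ m - 1 → 1 ≤ k r)
    (hfac : ocList S =
      ((List.range m).map
        (fun r => List.replicate (t (r + 1)) 1 ++ List.replicate (k (r + 1)) 0)).flatten) :
    m + ((m - 1) / 2) ^ 2 ≤ S.length :=
  (ClosedWord.closedRuns_of_ocList_eq ht hk hfac).length_bound
end
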